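/- For every nonnegative integer n, the set ℱ^n of all assemblages (G, γ_0, Γ) with |V(G)| ≤ n is well-behaved. -/

import Mathlib

attribute [local instance] Classical.propDecidable

set_option maxHeartbeats 1000000

noncomputable section

universe u

/-- A finite graph, possibly with loops and parallel edges. -/
structure MGraph : Type 1 where
  V : Type
  E : Type
  [fintypeV : Fintype V]
  [fintypeE : Fintype E]
  [decEqV : DecidableEq V]
  [decEqE : DecidableEq E]
  ends : E → Sym2 V

attribute [instance] MGraph.fintypeV MGraph.fintypeE MGraph.decEqV MGraph.decEqE

namespace MGraph

variable {G : MGraph}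

/-- A walk in a multigraph. -/
inductive Walk (G : MGraph) : G.V → G.V → Type where
  | nil (v : G.V) : Walk G v v
  | cons {u v w : G.V} (e : G.E) (he : G.ends e = s(u, v)) (p : Walk G v w) : Walk G u w

namespace Walk

def vertList : ∀ {u v : G.V}, G.Walk u v → List G.V
  | _, _, .nil v => [v]
  | u, _, .cons _ _ p => u :: p.vertList

def edgeList : ∀ {u v : G.V}, G.Walk u v → List G.E
  | _, _, .nil _ => []
  | _, _, .cons e _ p => e :: p.edgeList

/-- A path is a walk with pairwise distinct vertices. -/
def IsPath {u v : G.V} (p : G.Walk u v) : Prop := p.vertList.Nodup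

/-- A cycle is a nontrivial closed walk whose vertices are pairwise distinct except that
the first and the last vertex coincide, and whose edges are pairwise distinct. -/
def IsCycle {u v : G.V} (p : G.Walk u v) : Prop :=
  u = v ∧ p.edgeList ≠ [] ∧ p.edgeList.Nodup ∧ p.vertList.tail.Nodup

/-- The internal vertices of a walk. -/
def internalVerts {u v : G.V} (p : G.Walk u v) : List G.V := p.vertList.tail.dropLast

end Walk

/-- A homeomorphic embedding from `H` to `G`: an injection on vertices together with
an assignment of paths (cycles, for loops) to the edges, internally disjoint from each other
and meeting the branch vertices only as prescribed. -/
structure HomEmb (H G : MGraph) where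
  vmap : H.V → G.V
  vinj : Function.Injective vmap
  esrc : H.E → G.V
  etgt : H.E → G.V
  emap : ∀ e : H.E, G.Walk (esrc e) (etgt e)
  ends_eq : ∀ e : H.E, s(esrc e, etgt e) = (H.ends e).map vmap
  is_path : ∀ e : H.E, ¬ (H.ends e).IsDiag → (emap e).IsPath
  is_cycle : ∀ e : H.E, (H.ends e).IsDiag → (emap e).IsCycle
  edge_disjoint : ∀ e₁ e₂ : H.E, e₁ ≠ e₂ → ∀ x : G.V,
    x ∈ (emap e₁).vertList → x ∈ (emap e₂).vertList →
    ∃ v : H.V, vmap v = x ∧ v ∈ H.ends e₁ ∧ v ∈ H.ends e₂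
  vert_cond : ∀ (v : H.V) (e : H.E), vmap v ∈ (emap e).vertList → v ∈ H.ends e

/-- `G` contains `H` as a topological minor. -/
def TopMinor (H G : MGraph) : Prop := Nonempty (HomEmb H G)

/-- The subgraph of `G` induced by a set `S` of vertices. -/
def induce (G : MGraph) (S : Set G.V) : MGraph where
  V := S
  E := {e : G.E // ∀ v ∈ G.ends e, v ∈ S}
  ends := fun e => (G.ends e.1).attachWith e.2

/-- A walk from `u` to `v` all whose vertices lie in `S` and all whose edges lie in `F`. -/
def ReachSub (G : MGraph) (S : Set G.V) (F : Set G.E) (u v : G.V) : Prop :=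
  u ∈ S ∧ v ∈ S ∧ ∃ p : G.Walk u v, (∀ x ∈ p.vertList, x ∈ S) ∧ (∀ e ∈ p.edgeList, e ∈ F)

/-- `G` contains `H` as a minor: there are pairwise disjoint branch sets, connected via
a reserved set `F` of edges, and an injection of the edges of `H` into the non-reserved
edges of `G` joining the corresponding branch sets. -/
def MinorOf (H G : MGraph) : Prop :=
  ∃ (Bset : H.V → Set G.V) (F : Set G.E) (π : H.E → G.E),
    (∀ v w : H.V, v ≠ w → Disjoint (Bset v) (Bset w)) ∧
    (∀ e ∈ F, ∃ v : H.V, ∀ x ∈ G.ends e, x ∈ Bset v) ∧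
    (∀ v : H.V, (Bset v).Nonempty ∧ ∀ x ∈ Bset v, ∀ y ∈ Bset v, ReachSub G (Bset v) F x y) ∧
    Function.Injective π ∧ (∀ e, π e ∉ F) ∧
    (∀ (e : H.E) (u v : H.V), H.ends e = s(u, v) →
      ∃ x ∈ Bset u, ∃ y ∈ Bset v, G.ends (π e) = s(x, y))

end MGraph

/-- The Robertson chain of length `k`: a path of length `k` with every edge duplicated. -/
def RobertsonChain (k : ℕ) : MGraph where
  V := Fin (k+1)
  E := Fin k × Fin 2
  ends := fun e => s(e.1.castSucc, e.1.succ)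

/-- A drawing of a graph in the plane with no edge crossings: vertices are distinct points,
edges are arcs joining the points corresponding to their ends, the interior of an arc meets
no other arc and no vertex point. -/
structure PlaneDrawing (G : MGraph) where
  pos : G.V → ℝ × ℝ
  posInj : Function.Injective pos
  arc : G.E → ℝ → ℝ × ℝ
  arc_cont : ∀ e, ContinuousOn (arc e) (Set.Icc 0 1)
  arc_ends : ∀ e, s(arc e 0, arc e 1) = (G.ends e).map pos
  arc_injOn : ∀ e, Set.InjOn (arc e) (Set.Ico 0 1)
  arc_avoid_vert : ∀ e, ∀ t ∈ Set.Ioo (0:ℝ) 1, ∀ v, arc e t ≠ pos v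
  arc_no_cross : ∀ e₁ e₂, e₁ ≠ e₂ → ∀ t₁ ∈ Set.Ioo (0:ℝ) 1, ∀ t₂ ∈ Set.Icc (0:ℝ) 1,
    arc e₁ t₁ ≠ arc e₂ t₂

/-- A graph is planar if it can be embedded in the plane with no edge-crossing. -/
def MGraph.Planar (G : MGraph) : Prop := Nonempty (PlaneDrawing G)

end

noncomputable section

namespace MGraph
variable (G : MGraph)

/-- A separation of `G`. -/
def IsSep (A B : Set G.V) : Prop :=
  A ∪ B = Set.univ ∧
  ∀ e : G.E, ¬ ((∃ u ∈ G.ends e, u ∈ A \ B) ∧ (∃ v ∈ G.ends e, v ∈ B \ A))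

/-- The edges joining `v` to the set `S`. -/
def edgesFromTo (v : G.V) (S : Set G.V) : Set G.E := {e | ∃ u ∈ S, G.ends e = s(v, u)}

/-- `v ∈ A ∩ B` is pointed for `(A, B)`. -/
def Pointed (A B : Set G.V) (v : G.V) : Prop := (G.edgesFromTo v (A \ B)).ncard ≤ 1

/-- `v ∈ A ∩ B` is anti-pointed for `(A, B)`. -/
def AntiPointed (A B : Set G.V) (v : G.V) : Prop := (G.edgesFromTo v (B \ A)).ncard ≤ 1

/-- A pseudo-edge-cut modulo `Z`. -/
def PseudoEC (A B : Set G.V) (Z : Set G.V) : Prop :=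
  G.IsSep A B ∧ ∀ v ∈ (A ∩ B) \ Z, G.Pointed A B v

/-- The thickness of a separation. -/
def thickness (A B : Set G.V) : ℕ := {v | v ∈ A ∩ B ∧ ¬ G.Pointed A B v}.ncard

/-- The breadth of a separation. -/
def breadth (A B : Set G.V) : ℕ × ℕ := ((A ∩ B).ncard, G.thickness A B)

/-- `(A, B)` separates `X` and `Y`. -/
def Separates (A B X Y : Set G.V) : Prop :=
  ¬ (X ⊆ A ∩ B ∧ Y ⊆ A ∩ B) ∧ ((X ⊆ A ∧ Y ⊆ B) ∨ (X ⊆ B ∧ Y ⊆ A))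

/-- `(A, B)` strongly separates `U` and `W`. -/
def StronglySeparates (A B U W : Set G.V) : Prop :=
  U ⊆ A ∧ W ⊆ B ∧ ∀ x ∈ (A ∩ B) \ (U ∩ W), G.Pointed A B x ∧ x ∉ U

/-- There exist `n` pairwise disjoint paths in `G` from `X` to `Y`. -/
def LinkedSets (n : ℕ) (X Y : Set G.V) : Prop :=
  ∃ (a b : Fin n → G.V) (P : ∀ i, G.Walk (a i) (b i)),
    (∀ i, (P i).IsPath) ∧ (∀ i, a i ∈ X) ∧ (∀ i, b i ∈ Y) ∧
    ∀ i j, i ≠ j → ∀ x, x ∈ (P i).vertList → x ∉ (P j).vertList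

end MGraph

/-- `(A, B)` weakly separates `X` and `Y`. -/
def WeaklySeparates {α : Type} (A B X Y : Set α) : Prop :=
  (X ⊆ A ∧ Y ⊆ B) ∨ (X ⊆ B ∧ Y ⊆ A)

/-- Lexicographic comparison of breadths. -/
def breadthLE (p q : ℕ × ℕ) : Prop := p.1 < q.1 ∨ (p.1 = q.1 ∧ p.2 ≤ q.2)

def breadthLT (p q : ℕ × ℕ) : Prop := p.1 < q.1 ∨ (p.1 = q.1 ∧ p.2 < q.2)

/-- `u` is an ancestor of `v` (in a rooted tree given by its parent function). -/
def IterAnc {τ : Type} (parent : τ → τ) (u v : τ) : Prop := ∃ n : ℕ, parent^[n] v = u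

/-- `t` lies on the path of the tree between `t₁` and `t₂`. -/
def OnTreePathP {τ : Type} (parent : τ → τ) (t₁ t₂ t : τ) : Prop :=
  (IterAnc parent t t₁ ∨ IterAnc parent t t₂) ∧
  ∀ s, IterAnc parent s t₁ → IterAnc parent s t₂ → IterAnc parent s t

/-- The edge of the rooted tree with head `v` lies on the directed path from `a` to `b`. -/
def EdgeOnPathP {τ : Type} (parent : τ → τ) (a b v : τ) : Prop :=
  IterAnc parent a v ∧ v ≠ a ∧ IterAnc parent v b

/-- Generic precursor relation. -/
def PrecursorP {τ X : Type} (parent : τ → τ) (bag : τ → Set X) (t₁ t₂ : τ) : Prop :=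
  t₁ ≠ t₂ ∧ IterAnc parent t₁ t₂ ∧ (bag t₁).ncard = (bag t₂).ncard ∧
  ∀ t, IterAnc parent t₁ t → IterAnc parent t t₂ → (bag t₁).ncard ≤ (bag t).ncard

/-- A tree-decomposition of a multigraph. -/
structure TreeDecompU (G : MGraph) where
  τ : Type
  [fτ : Fintype τ]
  [dτ : DecidableEq τ]
  [nτ : Nonempty τ]
  T : SimpleGraph τ
  tree : T.IsTree
  bag : τ → Set G.V
  covers : ∀ v : G.V, ∃ t, v ∈ bag t
  edge_bag : ∀ e : G.E, ∃ t, ∀ v ∈ G.ends e, v ∈ bag t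
  bag_conn : ∀ v : G.V, ((SimpleGraph.induce {t | v ∈ bag t} T).Connected)

attribute [instance] TreeDecompU.fτ TreeDecompU.dτ TreeDecompU.nτ

/-- `G` has tree-width at most `w`. -/
def MGraph.TreewidthLE (G : MGraph) (w : ℕ) : Prop :=
  ∃ D : TreeDecompU G, ∀ t, (D.bag t).ncard ≤ w + 1

/-- The tree-width of `G`. -/
def MGraph.tw (G : MGraph) : ℕ := sInf {w | G.TreewidthLE w}

/-- A rooted tree-decomposition of a multigraph, the rooted tree being given by its
parent function. -/
structure RootedTD (G : MGraph) where
  τ : Type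
  [fτ : Fintype τ]
  [dτ : DecidableEq τ]
  root : τ
  parent : τ → τ
  parent_root : parent root = root
  reaches : ∀ t, ∃ n : ℕ, parent^[n] t = root
  bag : τ → Set G.V
  covers : ∀ v : G.V, ∃ t, v ∈ bag t
  edge_bag : ∀ e : G.E, ∃ t, ∀ v ∈ G.ends e, v ∈ bag t
  bag_conn : ∀ (v : G.V) (t₁ t₂ t : τ), v ∈ bag t₁ → v ∈ bag t₂ →
    OnTreePathP parent t₁ t₂ t → v ∈ bag t

attribute [instance] RootedTD.fτ RootedTD.dτ

namespace RootedTD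

variable {G : MGraph} (D : RootedTD G)

def Anc (t₁ t₂ : D.τ) : Prop := IterAnc D.parent t₁ t₂

/-- `↑t`. -/
def up (t : D.τ) : Set G.V := {v | ∃ s, IterAnc D.parent t s ∧ v ∈ D.bag s}

/-- `↓t`. -/
def down (t : D.τ) : Set G.V :=
  {v | v ∈ D.bag t ∨ ∃ s, ¬ IterAnc D.parent t s ∧ v ∈ D.bag s}

def Precursor (t₁ t₂ : D.τ) : Prop := PrecursorP D.parent D.bag t₁ t₂

/-- The width of a rooted tree-decomposition. -/
def width : ℕ := (Finset.univ.sup fun t : D.τ => (D.bag t).ncard) - 1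

/-- `c` is a child of `t`. -/
def ChildOf (c t : D.τ) : Prop := D.parent c = t ∧ c ≠ t

end RootedTD

/-- Generic notion of a `(Z, s)`-strip of length `h+1`, parametrized over the
pseudo-edge-cut predicate used for its third condition. -/
def IsStripGen {τ : Type} {G : MGraph} (parent : τ → τ) (bag : τ → Set G.V)
    (PEC : τ → Prop) (Z : Set G.V) (s : ℕ) {h : ℕ} (t : Fin (h+1) → τ) : Prop :=
  (∀ i : Fin h, PrecursorP parent bag (t i.castSucc) (t i.succ)) ∧
  (∀ i, Z ⊆ bag (t i)) ∧
  (∀ i, (bag (t i) \ Z).ncard = s) ∧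
  (∀ i, (bag (t i) \ Z).Nonempty) ∧
  (∀ i j, i ≠ j → Disjoint (bag (t i) \ Z) (bag (t j) \ Z)) ∧
  (∀ u, IterAnc parent (t 0) u → IterAnc parent u (t (Fin.last h)) →
    (bag u).ncard = (bag (t 0)).ncard → ¬ PEC u) ∧
  G.LinkedSets (bag (t 0)).ncard (bag (t 0)) (bag (t (Fin.last h)))

namespace RootedTD

variable {G : MGraph} (D : RootedTD G)

/-- A `(Z, s)`-strip in a rooted tree-decomposition. -/
def IsStrip (Z : Set G.V) (s : ℕ) {h : ℕ} (t : Fin (h+1) → D.τ) : Prop :=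
  IsStripGen D.parent D.bag (fun u => G.PseudoEC (D.down u) (D.up u) Z) Z s t

/-- A separation `(A, B)` `α`-breaks a strip. -/
def Breaks {h : ℕ} (t : Fin (h+1) → D.τ) (α : ℕ) (A B : Set G.V) : Prop :=
  ∃ (ii jj : Fin α → Fin (h+1)) (hα : 0 < α), StrictMono ii ∧ StrictMono jj ∧
    (∀ a b, ii a < jj b) ∧
    D.down (t (ii ⟨α - 1, by omega⟩)) ⊆ A ∧ D.up (t (jj ⟨0, hα⟩)) ⊆ B

/-- `D` is `N`-linked. -/
def NLinked (N : ℕ) : Prop :=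
  ∀ t₁ t₂ : D.τ, D.Precursor t₁ t₂ →
    N ≤ {v : G.V | v ∈ D.up t₂ ∧ ∀ u : D.τ, (D.bag u).ncard < (D.bag t₁).ncard →
          ¬ G.Separates (D.down u) (D.up u) (D.down t₁) {v}}.ncard →
    ¬ ∃ A B : Set G.V, G.IsSep A B ∧ (A ∩ B).ncard < (D.bag t₁).ncard ∧
        D.down t₁ ⊆ A ∧ D.up t₂ ⊆ B

/-- The elevation of `D` is at most `d`. -/
def ElevationLE (d : ℕ) : Prop :=
  ∀ (Z : Set G.V) (s : ℕ), 0 < s → ∀ (h : ℕ) (t : Fin (h+1) → D.τ),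
    D.IsStrip Z s t → h + 1 ≤ d

/-- A witness set for `(A, B)` being incorporated in `D` (conditions (INC1)-(INC3)). -/
def IncWitness (A B : Set G.V) (S : Finset D.τ) : Prop :=
  (∀ t ∈ S, breadthLE (G.breadth (D.down t) (D.up t)) (G.breadth A B)) ∧
  (B = ⋃ t ∈ (S : Set D.τ), D.up t) ∧
  (∑ t ∈ S, 2 ^ ((D.down t ∩ D.up t).ncard ^ 2 + G.thickness (D.down t) (D.up t))
      ≤ 2 ^ ((A ∩ B).ncard ^ 2 + G.thickness A B))

/-- `(A, B)` is incorporated in `D`. -/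
def Incorporated (A B : Set G.V) : Prop := ∃ S : Finset D.τ, D.IncWitness A B S

/-- `v ∈ X_{t₁} ∩ X_{t₂}` is coherent for `t₁, t₂`. -/
def Coherent (t₁ t₂ : D.τ) (v : G.V) : Prop :=
  (¬ G.Pointed (D.down t₁) (D.up t₁) v ∨
    ∃ i : ℕ, i ≤ 1 ∧ (G.edgesFromTo v (D.down t₁ \ D.up t₁)).ncard = i ∧
      (G.edgesFromTo v (D.down t₂ \ D.up t₂)).ncard = i) ∧
  (¬ G.AntiPointed (D.down t₂) (D.up t₂) v ∨
    ∃ i : ℕ, i ≤ 1 ∧ (G.edgesFromTo v (D.up t₁ \ D.down t₁)).ncard = i ∧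
      (G.edgesFromTo v (D.up t₂ \ D.down t₂)).ncard = i)

/-- `D` is `N`-integrated. -/
def NIntegrated (N : ℕ) : Prop :=
  ∀ t : Fin 4 → D.τ,
    (∀ i : Fin 3, D.Anc (t i.castSucc) (t i.succ)) →
    (∀ i, (D.bag (t i)).ncard = (D.bag (t 0)).ncard) →
    G.LinkedSets (D.bag (t 0)).ncard (D.bag (t 0)) (D.bag (t 3)) →
    (∀ i j, i < j → D.bag (t i) ∩ D.bag (t j) = ⋂ ℓ, D.bag (t ℓ)) →
    (∀ v ∈ ⋂ ℓ, D.bag (t ℓ), D.Coherent (t 0) (t 3) v) →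
    ∀ A B : Set G.V, G.IsSep A B →
      G.StronglySeparates A B (D.down (t 1)) (D.up (t 2)) →
      G.breadth A B = ((D.bag (t 1)).ncard,
        {v | v ∈ D.bag (t 0) ∩ D.bag (t 3) ∧
             ¬ G.Pointed (D.down (t 3)) (D.up (t 3)) v}.ncard) →
      N ≤ {v : G.V | v ∈ D.up (t 3) ∧ ∀ u : D.τ,
            breadthLT (G.breadth (D.down u) (D.up u)) (G.breadth A B) →
            ¬ G.Separates (D.down u) (D.up u) (D.down (t 0)) {v}}.ncard →
      ∃ u : D.τ, D.Anc (t 0) u ∧ D.Anc u (t 3) ∧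
        G.breadth (D.down u) (D.up u) = G.breadth A B

end RootedTD

/-- The number of separations of breadth `(i, j)` incorporated in `D`. -/
def sigCount {G : MGraph} (D : RootedTD G) (i j : ℕ) : ℕ :=
  {p : Set G.V × Set G.V | G.IsSep p.1 p.2 ∧ G.breadth p.1 p.2 = (i, j) ∧
    D.Incorporated p.1 p.2}.ncard

/-- The signature of `D'` is greater than the signature of `D`. -/
def SigGreater {G : MGraph} (D D' : RootedTD G) : Prop :=
  ∃ i j : ℕ, j ≤ i ∧ i ≤ Fintype.card G.V ∧
    (∀ i' j' : ℕ, j' ≤ i' → (i' < i ∨ (i' = i ∧ j' < j)) →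
      sigCount D i' j' = sigCount D' i' j') ∧
    sigCount D i j < sigCount D' i j

end
noncomputable section

/-- A subgraph of `G`, given by its vertex set and edge set. -/
def SubPair (G : MGraph) : Type := Set G.V × Set G.E

/-- The component of the subgraph `(S, F)` containing `v`. -/
def componentSub (G : MGraph) (S : Set G.V) (F : Set G.E) (v : G.V) : SubPair G :=
  ({x | MGraph.ReachSub G S F v x}, {e | e ∈ F ∧ ∀ x ∈ G.ends e, MGraph.ReachSub G S F v x})

/-- The number of components of the subgraph `(S, F)`. -/
def numComp (G : MGraph) (S : Set G.V) (F : Set G.E) : ℕ :=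
  {C : Set G.V | ∃ u ∈ S, C = {v | MGraph.ReachSub G S F u v}}.ncard

/-- `v` is a cut-vertex of the subgraph `(S, F)`. -/
def IsCutVert (G : MGraph) (S : Set G.V) (F : Set G.E) (v : G.V) : Prop :=
  v ∈ S ∧ numComp G S F < numComp G (S \ {v}) F

def IsSubgraphOf (G : MGraph) (p q : SubPair G) : Prop := p.1 ⊆ q.1 ∧ p.2 ⊆ q.2

def EdgeClosed (G : MGraph) (p : SubPair G) : Prop := ∀ e ∈ p.2, ∀ v ∈ G.ends e, v ∈ p.1

def ConnectedSub (G : MGraph) (p : SubPair G) : Prop :=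
  p.1.Nonempty ∧ ∀ u ∈ p.1, ∀ v ∈ p.1, MGraph.ReachSub G p.1 p.2 u v

/-- A block of the subgraph `(S, F)`: a maximal connected subgraph with no cut-vertex. -/
def IsBlock (G : MGraph) (S : Set G.V) (F : Set G.E) (b : SubPair G) : Prop :=
  IsSubgraphOf G b (S, F) ∧ EdgeClosed G b ∧ ConnectedSub G b ∧
  (∀ v, ¬ IsCutVert G b.1 b.2 v) ∧
  ∀ b' : SubPair G, IsSubgraphOf G b' (S, F) → EdgeClosed G b' → ConnectedSub G b' →
    (∀ v, ¬ IsCutVert G b'.1 b'.2 v) → IsSubgraphOf G b b' → b = b'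

/-- Adjacency of the block-cutvertex incidence graph of the subgraph `(S, F)`. -/
def bcAdj (G : MGraph) (S : Set G.V) (F : Set G.E) :
    (SubPair G ⊕ G.V) → (SubPair G ⊕ G.V) → Prop
  | Sum.inl b, Sum.inr v => IsBlock G S F b ∧ IsCutVert G S F v ∧ v ∈ b.1
  | Sum.inr v, Sum.inl b => IsBlock G S F b ∧ IsCutVert G S F v ∧ v ∈ b.1
  | _, _ => False

/-- The block-cutvertex incidence graph (whose "block tree" components realize the
block trees of the components of `(S, F)`). -/
def bcGraph (G : MGraph) (S : Set G.V) (F : Set G.E) : SimpleGraph (SubPair G ⊕ G.V) where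
  Adj := bcAdj G S F
  symm := by
    refine ⟨fun x y h => ?_⟩
    cases x <;> cases y <;> simp_all [bcAdj]
  loopless := by
    refine ⟨fun x h => ?_⟩
    cases x <;> simp_all [bcAdj]

/-- The block `B` lies on the block-tree path between the blocks `B₁` and `B₂`. -/
def OnBlockPath (G : MGraph) (S : Set G.V) (F : Set G.E) (B₁ B₂ B : SubPair G) : Prop :=
  IsBlock G S F B ∧
  Nonempty ((bcGraph G S F).Walk (Sum.inl B₁) (Sum.inl B₂)) ∧
  ∀ p : (bcGraph G S F).Walk (Sum.inl B₁) (Sum.inl B₂), Sum.inl B ∈ p.support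

/-- The graph that is the path of blocks of `(S, F)` from `B₁` to `B₂`. -/
def pathOfBlocks (G : MGraph) (S : Set G.V) (F : Set G.E) (B₁ B₂ : SubPair G) : SubPair G :=
  ({v | ∃ B, OnBlockPath G S F B₁ B₂ B ∧ v ∈ B.1},
   {e | ∃ B, OnBlockPath G S F B₁ B₂ B ∧ e ∈ B.2})

/-- The block of `(S, F)` containing an edge of `E₀`. -/
def blockThrough (G : MGraph) (S : Set G.V) (F : Set G.E) (E₀ : Set G.E) : SubPair G :=
  ({v | ∃ B, IsBlock G S F B ∧ (∃ e ∈ E₀, e ∈ B.2) ∧ v ∈ B.1},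
   {e' | ∃ B, IsBlock G S F B ∧ (∃ e ∈ E₀, e ∈ B.2) ∧ e' ∈ B.2})

/-- A family of `n` walks in `G`. -/
structure PathFamily (G : MGraph) (n : ℕ) where
  a : Fin n → G.V
  b : Fin n → G.V
  P : ∀ i, G.Walk (a i) (b i)

namespace PathFamily

variable {G : MGraph} {n : ℕ}

/-- The vertices of the members other than the `i₀`-th one. -/
def others (Fam : PathFamily G n) (i₀ : Fin n) : Set G.V :=
  {x | ∃ j, j ≠ i₀ ∧ x ∈ (Fam.P j).vertList}

/-- The vertices of all members. -/
def allVerts (Fam : PathFamily G n) : Set G.V := {x | ∃ j, x ∈ (Fam.P j).vertList}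

end PathFamily

/-- The data of the segment of the member `P i₀` of a path family between two of its
vertices `v₁, v₂`; its first and last edges are "the edges of `P` incident with
`v₁` and `v₂`" used in the definition of the graphs `Q`, `L` and `R`. -/
structure SegConfig (G : MGraph) {n : ℕ} (Fam : PathFamily G n) (i₀ : Fin n)
    (v₁ v₂ : G.V) where
  seg : G.Walk v₁ v₂
  sub_v : seg.vertList.IsInfix (Fam.P i₀).vertList
  sub_e : seg.edgeList.IsInfix (Fam.P i₀).edgeList
  nontriv : seg.edgeList ≠ []

namespace SegConfig

variable {G : MGraph} {n : ℕ} {Fam : PathFamily G n} {i₀ : Fin n} {v₁ v₂ : G.V}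

/-- The vertex set of `G − ⋃_{W ∈ 𝒫 − {P}} V(W)`. -/
def delS (_ : SegConfig G Fam i₀ v₁ v₂) : Set G.V := Set.univ \ Fam.others i₀

/-- The edge set of `G − ⋃_{W ∈ 𝒫 − {P}} V(W)`. -/
def delF (cfg : SegConfig G Fam i₀ v₁ v₂) : Set G.E :=
  {e | ∀ x ∈ G.ends e, x ∈ cfg.delS}

/-- The block `B₁` containing the edge of `P` incident with `v₁`. -/
def B1 (cfg : SegConfig G Fam i₀ v₁ v₂) : SubPair G :=
  blockThrough G cfg.delS cfg.delF {e | cfg.seg.edgeList.head? = some e}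

/-- The block `B₂` containing the edge of `P` incident with `v₂`. -/
def B2 (cfg : SegConfig G Fam i₀ v₁ v₂) : SubPair G :=
  blockThrough G cfg.delS cfg.delF {e | cfg.seg.edgeList.getLast? = some e}

/-- The `(Q, 𝒫, P)`-graph. -/
def Qgraph (cfg : SegConfig G Fam i₀ v₁ v₂) : SubPair G :=
  pathOfBlocks G cfg.delS cfg.delF cfg.B1 cfg.B2

/-- The edges of the single-edge blocks of the path of blocks. -/
def singles (cfg : SegConfig G Fam i₀ v₁ v₂) : Set G.E :=
  {e' | ∃ B, OnBlockPath G cfg.delS cfg.delF cfg.B1 cfg.B2 B ∧ (∃ e₀, B.2 = {e₀}) ∧ e' ∈ B.2}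

/-- The `(L, 𝒫, P)`-graph. -/
def Lgraph (cfg : SegConfig G Fam i₀ v₁ v₂) : SubPair G :=
  if ∀ B, OnBlockPath G cfg.delS cfg.delF cfg.B1 cfg.B2 B → ¬ ∃ e₀, B.2 = {e₀}
  then cfg.Qgraph
  else componentSub G cfg.Qgraph.1 (cfg.Qgraph.2 \ cfg.singles) v₁

/-- The `(R, 𝒫, P)`-graph. -/
def Rgraph (cfg : SegConfig G Fam i₀ v₁ v₂) : SubPair G :=
  if ∀ B, OnBlockPath G cfg.delS cfg.delF cfg.B1 cfg.B2 B → ¬ ∃ e₀, B.2 = {e₀}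
  then cfg.Qgraph
  else componentSub G cfg.Qgraph.1 (cfg.Qgraph.2 \ cfg.singles) v₂

end SegConfig

/-- Two edge-disjoint paths from `x` to `y` avoiding `avoid` and internally
disjoint from `intAvoid`. -/
def TwoEdgeDisjointPaths (G : MGraph) (x y : G.V) (avoid intAvoid : Set G.V) : Prop :=
  ∃ (p q : G.Walk x y), p.IsPath ∧ q.IsPath ∧
    (∀ z ∈ p.vertList, z ∉ avoid) ∧ (∀ z ∈ q.vertList, z ∉ avoid) ∧
    (∀ z ∈ p.internalVerts, z ∉ intAvoid) ∧ (∀ z ∈ q.internalVerts, z ∉ intAvoid) ∧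
    ∀ e ∈ p.edgeList, e ∉ q.edgeList

section TreeSets

/-- `s` is an internal node of the path between `t₁` and `t₂`. -/
def interiorNodeU {G : MGraph} (D : TreeDecompU G) (t₁ t₂ s : D.τ) : Prop :=
  s ≠ t₁ ∧ s ≠ t₂ ∧ ∀ p : D.T.Walk t₁ t₂, s ∈ p.support

/-- reachability in the tree avoiding the set `R`. -/
def reachAvoidU {G : MGraph} (D : TreeDecompU G) (R : Set D.τ) (a b : D.τ) : Prop :=
  a ∉ R ∧ b ∉ R ∧ ∃ p : D.T.Walk a b, ∀ x ∈ p.support, x ∉ R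

/-- The vertex set of the graph `G'` used for jumps: the subgraph induced by
`X_{t₁} ∪ X_{t₂}` together with the bags of the component of `T − {t₁, t₂}`
containing an internal node of the `t₁`–`t₂` path. -/
def GsetU {G : MGraph} (D : TreeDecompU G) (t₁ t₂ : D.τ) : Set G.V :=
  D.bag t₁ ∪ D.bag t₂ ∪
  {v | ∃ u s, interiorNodeU D t₁ t₂ s ∧ reachAvoidU D {t₁, t₂} s u ∧ v ∈ D.bag u}

/-- reachability in the underlying tree of a rooted tree, avoiding the set `R`. -/
def rReachAvoid {τ : Type} (parent : τ → τ) (R : Set τ) (a b : τ) : Prop :=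
  a ∉ R ∧ b ∉ R ∧
  Relation.ReflTransGen
    (fun x y => x ∉ R ∧ y ∉ R ∧ x ≠ y ∧ (parent x = y ∨ parent y = x)) a b

/-- The vertex set of the graph `G'` used for parent-side and child-side jumps. -/
def GsetR {G : MGraph} (D : RootedTD G) (t' t : D.τ) : Set G.V :=
  D.bag t' ∪ D.bag t ∪
  {v | ∃ u s, OnTreePathP D.parent t' t s ∧ s ≠ t' ∧ s ≠ t ∧
        rReachAvoid D.parent {t', t} s u ∧ v ∈ D.bag u}

end TreeSets

/-- A right jump from `v₁` (with respect to a path family `𝒫`, a member `P i₀` and the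
segment configuration between `X_{t₁}` and `X_{t₂}`). -/
def RightJumpU {G : MGraph} (D : TreeDecompU G) (t₁ t₂ : D.τ) {n : ℕ}
    (Fam : PathFamily G n) (i₀ : Fin n) {v₁ v₂ : G.V}
    (cfg : SegConfig G Fam i₀ v₁ v₂) {x y : G.V} (p : G.Walk x y) : Prop :=
  p.IsPath ∧ (∀ z ∈ p.vertList, z ∈ GsetU D t₁ t₂) ∧
  x ∈ cfg.Lgraph.1 ∧ y ∈ Fam.others i₀ ∧
  ∀ z ∈ p.internalVerts, z ∉ cfg.Lgraph.1 ∧ z ∉ Fam.allVerts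

/-- A left jump from `v₂`. -/
def LeftJumpU {G : MGraph} (D : TreeDecompU G) (t₁ t₂ : D.τ) {n : ℕ}
    (Fam : PathFamily G n) (i₀ : Fin n) {v₁ v₂ : G.V}
    (cfg : SegConfig G Fam i₀ v₁ v₂) {x y : G.V} (p : G.Walk x y) : Prop :=
  p.IsPath ∧ (∀ z ∈ p.vertList, z ∈ GsetU D t₁ t₂) ∧
  x ∈ cfg.Rgraph.1 ∧ y ∈ Fam.others i₀ ∧
  ∀ z ∈ p.internalVerts, z ∉ cfg.Rgraph.1 ∧ z ∉ Fam.allVerts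

/-- A parent-side jump at `t` with respect to `t'`. -/
def ParentJump {G : MGraph} (D : RootedTD G) (t' t : D.τ) {n : ℕ}
    (Fam : PathFamily G n) (i₀ : Fin n) {v₁ v₂ : G.V}
    (cfg : SegConfig G Fam i₀ v₁ v₂) {x y : G.V} (p : G.Walk x y) : Prop :=
  p.IsPath ∧ (∀ z ∈ p.vertList, z ∈ GsetR D t' t) ∧
  x ∈ cfg.Rgraph.1 ∧ y ∈ Fam.others i₀ ∧ y ∉ D.bag t' ∩ D.bag t ∧
  ∀ z ∈ p.internalVerts, z ∉ cfg.Rgraph.1 ∧ z ∉ Fam.allVerts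

/-- A child-side jump at `t'` with respect to `t`. -/
def ChildJump {G : MGraph} (D : RootedTD G) (t' t : D.τ) {n : ℕ}
    (Fam : PathFamily G n) (i₀ : Fin n) {v₁ v₂ : G.V}
    (cfg : SegConfig G Fam i₀ v₁ v₂) {x y : G.V} (p : G.Walk x y) : Prop :=
  p.IsPath ∧ (∀ z ∈ p.vertList, z ∈ GsetR D t' t) ∧
  x ∈ cfg.Lgraph.1 ∧ y ∈ Fam.others i₀ ∧ y ∉ D.bag t' ∩ D.bag t ∧
  ∀ z ∈ p.internalVerts, z ∉ cfg.Lgraph.1 ∧ z ∉ Fam.allVerts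

end
noncomputable section

/-- A quasi-order: a set with a reflexive and transitive relation. -/
structure QuasiOrder : Type 1 where
  carrier : Type
  le : carrier → carrier → Prop
  refl : ∀ a, le a a
  trans : ∀ a b c, le a b → le b c → le a c

/-- A quasi-order is a well-quasi-order if every infinite sequence has a
nondecreasing pair. -/
def QuasiOrder.IsWQO (Q : QuasiOrder) : Prop :=
  ∀ f : ℕ → Q.carrier, ∃ i j : ℕ, i < j ∧ Q.le (f i) (f j)

/-- A finite rooted tree, given by its parent function. -/
structure RTree : Type 1 where
  V : Type
  [fv : Fintype V]
  [dv : DecidableEq V]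
  root : V
  parent : V → V
  parent_root : parent root = root
  reaches : ∀ v, ∃ n : ℕ, parent^[n] v = root

attribute [instance] RTree.fv RTree.dv

namespace RTree

/-- We identify an edge of a rooted tree with its head (a non-root node);
`EBefore v w` says that the edge with head `v` strictly precedes the edge with head `w`
on a directed path. -/
def EBefore (T : RTree) (v w : T.V) : Prop :=
  v ≠ T.root ∧ w ≠ T.root ∧ IterAnc T.parent v (T.parent w)

/-- The edge with head `v` lies on the directed path from `a` to `b`. -/
def EOnPath (T : RTree) (a b v : T.V) : Prop :=
  v ≠ T.root ∧ IterAnc T.parent a v ∧ v ≠ a ∧ IterAnc T.parent v b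

/-- There is a directed path of length `ℓ` in `T`. -/
def HasDirPathLen (T : RTree) (ℓ : ℕ) : Prop :=
  ∃ a b : T.V, (T.parent)^[ℓ] b = a ∧ ∀ j < ℓ, (T.parent)^[j] b ≠ a

end RTree

/-- `v` precedes `w` in `T` with respect to `(φ, τ, μ)` (functions on edges being
identified with functions on non-root nodes via heads). -/
def Precedes {L : Type} (T : RTree) (φ τm : T.V → Finset L) (μ : T.V → ℕ)
    (v w : T.V) : Prop :=
  v ≠ T.root ∧ w ≠ T.root ∧ IterAnc T.parent v w ∧
  (φ v).card = (φ w).card ∧ τm v = τm w ∧ μ v = μ w ∧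
  (∀ g, T.EOnPath v w g → (φ w).card ≤ (φ g).card) ∧
  (∀ g, T.EOnPath v w g → (φ g).card = (φ v).card → μ v ≤ μ g)

/-- `(T, φ, τ, μ)` is `(n, m, N)`-decorated. -/
def Decorated {L : Type} (T : RTree) (φ τm : T.V → Finset L) (μ : T.V → ℕ)
    (n m N : ℕ) : Prop :=
  (∀ v : T.V, v ≠ T.root → (φ v).card ≤ n ∧ τm v ⊆ φ v ∧ μ v ≤ N) ∧
  (∀ e e' e'' : T.V, T.EBefore e e' → T.EBefore e' e'' → φ e ∩ φ e'' ⊆ φ e') ∧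
  (∀ (t : ℕ) (ht : 0 < t) (a b : T.V), IterAnc T.parent a b →
    ∀ es : Fin t → T.V,
      (∀ i, T.EOnPath a b (es i)) →
      (∀ i j : Fin t, i < j → T.EBefore (es i) (es j)) →
      (∀ i, (φ (es i)).card = (φ (es ⟨0, ht⟩)).card) →
      ∀ Z : Finset L, (∀ i j, i ≠ j → φ (es i) ∩ φ (es j) = Z) →
      (∀ e, T.EOnPath a b e → (φ (es ⟨0, ht⟩)).card ≤ (φ e).card) →
      (∀ e, T.EOnPath a b e → (φ e).card = (φ (es ⟨0, ht⟩)).card →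
        ¬ τm e ⊆ Z ∧ μ e = μ (es ⟨0, ht⟩)) →
      t ≤ m)

/-- A stable set in a (possibly infinite) graph. -/
def StableIn {V : Type} (D : SimpleGraph V) (S : Set V) : Prop :=
  ∀ x ∈ S, ∀ y ∈ S, ¬ D.Adj x y

/-- A set of vertices of an infinite graph is rich if no infinite subset of it is stable. -/
def RichIn {V : Type} (D : SimpleGraph V) (I : Set V) : Prop :=
  ∀ J : Set V, J ⊆ I → J.Infinite → ¬ StableIn D J

end
noncomputable section

universe u

/-- A march in `G`: a sequence of distinct vertices, each entry carrying an
essential number in `{0, 1, 2}`. -/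
def March (G : MGraph) : Type := {l : List (G.V × Fin 3) // (l.map Prod.fst).Nodup}

/-- The rooted extension of the rooted graph `(G, γ)`. -/
def MGraph.rext (G : MGraph) (γ : March G) : MGraph where
  V := G.V ⊕ Fin γ.1.length
  E := G.E ⊕ (Σ i : Fin γ.1.length, Fin ((γ.1.get i).2 : ℕ))
  ends := fun e =>
    match e with
    | Sum.inl e => (G.ends e).map Sum.inl
    | Sum.inr x => s(Sum.inl (γ.1.get x.1).1, Sum.inr x.1)

/-- A homeomorphic embedding between rooted graphs. -/
structure RHom (G₁ G₂ : MGraph) (γ₁ : March G₁) (γ₂ : March G₂) where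
  hlen : γ₁.1.length = γ₂.1.length
  emb : MGraph.HomEmb (G₁.rext γ₁) (G₂.rext γ₂)
  ind : ∀ i : Fin γ₁.1.length,
    emb.vmap (Sum.inr i) = Sum.inr (Fin.cast hlen i)
  int_cond : ∀ (i : Fin γ₂.1.length) (e : (G₁.rext γ₁).E),
    (Sum.inl (γ₂.1.get i).1 : (G₂.rext γ₂).V) ∈ (emb.emap e).internalVerts →
    ((Sum.inr (Fin.cast hlen.symm i) : (G₁.rext γ₁).V) ∈ (G₁.rext γ₁).ends e ∨
     ((γ₁.1.get (Fin.cast hlen.symm i)).2 = 0 ∧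
      (Sum.inl (γ₁.1.get (Fin.cast hlen.symm i)).1 : (G₁.rext γ₁).V) ∈ (G₁.rext γ₁).ends e))
  pre_cond : ∀ (i : Fin γ₂.1.length) (v : (G₁.rext γ₁).V),
    emb.vmap v = Sum.inl (γ₂.1.get i).1 → v = Sum.inl (γ₁.1.get (Fin.cast hlen.symm i)).1

/-- A `Q`-assemblage: a rooted graph, a finite (indexed) multiset of marches,
a `Q`-label for each march and a `Q`-label for each vertex. -/
structure QA (Q : Type u) (le : Q → Q → Prop) : Type (max 1 u) where
  G : MGraph
  γ0 : March G
  ι : Type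
  [fι : Fintype ι]
  mar : ι → March G
  lab : ι → Q
  φ : G.V → Q

attribute [instance] QA.fι

/-- Simulation of `Q`-assemblages. -/
def Sim {Q : Type u} (le : Q → Q → Prop) (S S' : QA Q le) : Prop :=
  ∃ (η : RHom S.G S'.G S.γ0 S'.γ0) (j : S.ι → S'.ι),
    Function.Injective j ∧
    (∀ v : S.G.V, ∃ v' : S'.G.V,
      η.emb.vmap (Sum.inl v) = Sum.inl v' ∧ le (S.φ v) (S'.φ v')) ∧
    (∀ i, le (S.lab i) (S'.lab (j i))) ∧
    ∀ i, ((S.mar i).1.map fun p => η.emb.vmap (Sum.inl p.1)) =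
         ((S'.mar (j i)).1.map fun p => (Sum.inl p.1 : (S'.G.rext S'.γ0).V))

/-- An assemblage (the underlying assemblage of a `Q`-assemblage). -/
structure Asmb : Type 1 where
  G : MGraph
  γ0 : March G
  ι : Type
  [fι : Fintype ι]
  mar : ι → March G

attribute [instance] Asmb.fι

/-- The underlying assemblage. -/
def QA.und {Q : Type u} {le : Q → Q → Prop} (S : QA Q le) : Asmb :=
  { G := S.G, γ0 := S.γ0, ι := S.ι, mar := S.mar }

/-- `le` is a well-quasi-ordering of `Q`. -/
def IsWQORel {Q : Type u} (le : Q → Q → Prop) : Prop :=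
  (∀ a, le a a) ∧ (∀ a b c, le a b → le b c → le a c) ∧
  ∀ f : ℕ → Q, ∃ i j : ℕ, i < j ∧ le (f i) (f j)

/-- A set of assemblages is well-behaved. -/
def WellBehaved (F : Set Asmb) : Prop :=
  ∀ (Q : Type) (le : Q → Q → Prop), IsWQORel le →
    ∀ S : ℕ → QA Q le, (∀ i, (S i).und ∈ F) →
    ∃ i i' : ℕ, i < i' ∧ Sim le (S i) (S i')

/-- A rooted tree-decomposition of an assemblage. -/
structure ATD (A : Asmb) where
  D : RootedTD A.G
  root_bag : ∀ p ∈ A.γ0.1, p.1 ∈ D.bag D.root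
  α : A.ι → D.τ
  mar_bag : ∀ i : A.ι, ∀ p ∈ (A.mar i).1, p.1 ∈ D.bag (α i)

/-- The adhesion of a rooted tree-decomposition of an assemblage is at most `h`. -/
def AdhesionLE (A : Asmb) (T : ATD A) (h : ℕ) : Prop :=
  ∀ t : T.D.τ, t ≠ T.D.root → (T.D.bag t ∩ T.D.bag (T.D.parent t)).ncard ≤ h

/-- The essential number of the vertex `v` in the root march `γ_t` of the branch at `t`. -/
def essNum (A : Asmb) (T : ATD A) (t : T.D.τ) (v : A.G.V) : Fin 3 :=
  if (∀ i : A.ι, ¬ IterAnc T.D.parent t (T.α i) → ∀ p ∈ (A.mar i).1, p.1 ≠ v) ∧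
     (A.G.edgesFromTo v (Set.univ \ T.D.up t)).ncard = 0 ∧
     (∀ p ∈ A.γ0.1, p.1 = v → p.2 = 0)
  then 0
  else if (∀ i : A.ι, ¬ IterAnc T.D.parent t (T.α i) → ∀ p ∈ (A.mar i).1, p.1 ≠ v) ∧
     (((A.G.edgesFromTo v (Set.univ \ T.D.up t)).ncard = 1 ∧
        (∀ p ∈ A.γ0.1, p.1 = v → p.2 = 0)) ∨
      ((A.G.edgesFromTo v (Set.univ \ T.D.up t)).ncard = 0 ∧
        ∃ p ∈ A.γ0.1, p.1 = v ∧ p.2 = 1))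
  then 1 else 2

/-- The list of vertex/essential-number pairs of the march `γ_t`, with respect to
an ordering list `l` of `X_t ∩ X_{parent t}`. -/
def gammaList (A : Asmb) (T : ATD A) (t : T.D.τ) (l : List A.G.V) :
    List (A.G.V × Fin 3) :=
  l.map fun v => (v, essNum A T t v)

theorem gammaList_fst (A : Asmb) (T : ATD A) (t : T.D.τ) (l : List A.G.V) :
    (gammaList A T t l).map Prod.fst = l := by
  simp only [gammaList, List.map_map]
  exact List.map_congr_left (fun a _ => rfl) |>.trans (List.map_id _)

/-- `l` is an ordering of (an enumeration of) the finite set `X`. -/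
def IsOrdering {γ : Type} (l : List γ) (X : Set γ) : Prop :=
  l.Nodup ∧ ∀ v, v ∈ l ↔ v ∈ X

theorem coerce_nodup {G : MGraph} (S : Set G.V) :
    ∀ (l : List (G.V × Fin 3)) (H : ∀ p ∈ l, p.1 ∈ S),
      (l.map Prod.fst).Nodup →
      ((l.pmap (fun (p : G.V × Fin 3) (hp : p.1 ∈ S) => ((⟨p.1, hp⟩ : S), p.2)) H).map
        Prod.fst).Nodup := by
  intro l
  induction l with
  | nil => intro H h; simp [List.pmap]
  | cons a l ih =>
      intro H h
      simp only [List.map_cons, List.nodup_cons, List.pmap] at h ⊢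
      constructor
      · intro hmem
        simp only [List.mem_map, List.mem_pmap] at hmem
        obtain ⟨q, ⟨p, hp, rfl⟩, hval⟩ := hmem
        have h1 : p.1 = a.1 := congrArg Subtype.val hval
        exact h.1 (h1 ▸ List.mem_map_of_mem (f := Prod.fst) hp)
      · exact ih _ h.2

/-- Reinterpret a list of vertex/essential-number pairs as a march of an induced
subgraph. -/
def coerceMarch {G : MGraph} (S : Set G.V) (l : List (G.V × Fin 3))
    (hm : ∀ p ∈ l, p.1 ∈ S) (hnd : (l.map Prod.fst).Nodup) : March (G.induce S) :=
  ⟨l.pmap (fun (p : G.V × Fin 3) (hp : p.1 ∈ S) => ((⟨p.1, hp⟩ : S), p.2)) hm,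
    coerce_nodup S l hm hnd⟩

/-- The `(f, φ)`-branch of a rooted tree-decomposition of a `Q`-assemblage at a node `c`,
with respect to an ordering list `l` of `X_c ∩ X_{parent c}`. -/
def branchQA {Q : Type u} {le : Q → Q → Prop} (S : QA Q le) (T : ATD S.und) (c : T.D.τ)
    (l : List S.G.V) (hl : ∀ v ∈ l, v ∈ T.D.bag c) (hnd : l.Nodup) : QA Q le where
  G := S.G.induce (T.D.up c)
  γ0 := coerceMarch (T.D.up c) (gammaList S.und T c l)
    (by
      intro p hp
      simp only [gammaList, List.mem_map] at hp
      obtain ⟨v, hv, rfl⟩ := List.mem_map.mp hp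
      exact ⟨c, ⟨0, rfl⟩, hl v hv⟩)
    (by exact (congrArg List.Nodup (gammaList_fst S.und T c l)).mpr hnd)
  ι := {i : S.ι // IterAnc T.D.parent c (T.α i)}
  mar := fun i => coerceMarch (T.D.up c) (S.mar i.1).1
    (fun p hp => ⟨T.α i.1, i.2, T.mar_bag i.1 p hp⟩)
    (S.mar i.1).2
  lab := fun i => S.lab i.1
  φ := fun v => S.φ v.1

/-- The sequence `b_c` associated with a child `c` (with respect to an ordering
list `l` of `X_c ∩ X_{parent c}`). -/
def bseq (A : Asmb) (T : ATD A) (c : T.D.τ) (l : List A.G.V) : List Bool :=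
  l.map fun v =>
    if ∃ e : A.G.E, ∃ u, u ∈ T.D.up c ∧ u ∉ T.D.bag c ∩ T.D.bag (T.D.parent c) ∧
        A.G.ends e = s(v, u)
    then true else false

/-- The underlying assemblage of the encoding of a rooted tree-decomposition of an
assemblage at a node `t`. -/
def encU (A : Asmb) (T : ATD A) (t : T.D.τ)
    (lt : List A.G.V)
    (hlt : t ≠ T.D.root → IsOrdering lt (T.D.bag t ∩ T.D.bag (T.D.parent t)))
    (lc : T.D.τ → List A.G.V)
    (hlc : ∀ c, T.D.ChildOf c t → IsOrdering (lc c) (T.D.bag c ∩ T.D.bag t)) : Asmb where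
  G := A.G.induce (T.D.bag t)
  γ0 :=
    if h : t = T.D.root
    then coerceMarch (T.D.bag t) A.γ0.1 (fun p hp => by rw [h]; exact T.root_bag p hp)
      A.γ0.2
    else coerceMarch (T.D.bag t) (gammaList A T t lt)
      (by
        intro p hp
        simp only [gammaList, List.mem_map] at hp
        obtain ⟨v, hv, rfl⟩ := hp
        exact (((hlt h).2 v).mp hv).1)
      (by rw [gammaList_fst]; exact (hlt h).1)
  ι := {c : T.D.τ // T.D.ChildOf c t} ⊕ {i : A.ι // T.α i = t}
  mar := fun x =>
    match x with
    | Sum.inl c => coerceMarch (T.D.bag t) (gammaList A T c.1 (lc c.1))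
        (by
          intro p hp
          simp only [gammaList, List.mem_map] at hp
          obtain ⟨v, hv, rfl⟩ := hp
          exact (((hlc c.1 c.2).2 v).mp hv).2)
        (by rw [gammaList_fst]; exact (hlc c.1 c.2).1)
    | Sum.inr i => coerceMarch (T.D.bag t) (A.mar i.1).1
        (fun p hp => by rw [← i.2]; exact T.mar_bag i.1 p hp)
        (A.mar i.1).2

/-- The order relation on the labels of an encoding: the disjoint union of `le` with
(simulation × equality). -/
def encRel {Q : Type u} (le : Q → Q → Prop) :
    (Q ⊕ (QA Q le × List Bool)) → (Q ⊕ (QA Q le × List Bool)) → Prop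
  | Sum.inl a, Sum.inl b => le a b
  | Sum.inr a, Sum.inr b => Sim le a.1 b.1 ∧ a.2 = b.2
  | _, _ => False

/-- The encoding of a rooted tree-decomposition of a `Q`-assemblage at a node `t`. -/
def encQ {Q : Type u} {le : Q → Q → Prop} (S : QA Q le) (T : ATD S.und) (t : T.D.τ)
    (lt : List S.G.V)
    (hlt : t ≠ T.D.root → IsOrdering lt (T.D.bag t ∩ T.D.bag (T.D.parent t)))
    (lc : T.D.τ → List S.G.V)
    (hlc : ∀ c, T.D.ChildOf c t → IsOrdering (lc c) (T.D.bag c ∩ T.D.bag t)) :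
    QA (Q ⊕ (QA Q le × List Bool)) (encRel le) where
  G := S.G.induce (T.D.bag t)
  γ0 := (encU S.und T t lt hlt lc hlc).γ0
  ι := {c : T.D.τ // T.D.ChildOf c t} ⊕ {i : S.ι // T.α i = t}
  mar := fun x => (encU S.und T t lt hlt lc hlc).mar x
  lab := fun x =>
    match x with
    | Sum.inl c => Sum.inr
        (branchQA S T c.1 (lc c.1)
          (fun v hv => (((hlc c.1 c.2).2 v).mp hv).1)
          ((hlc c.1 c.2).1),
         bseq S.und T c.1 (lc c.1))
    | Sum.inr i => Sum.inl (S.lab i.1)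
  φ := fun v => Sum.inl (S.φ v.1)

/-- `T` is an `N`-unimpeded rooted tree-decomposition of the assemblage `A`. -/
def Unimpeded (A : Asmb) (T : ATD A) (N : ℕ) : Prop :=
  ∀ t : Fin (N+1) → T.D.τ,
    (∀ j, t j ≠ T.D.root) →
    (∀ j : Fin N, IterAnc T.D.parent (t j.castSucc) (T.D.parent (t j.succ))) →
    (∀ j j', j ≠ j' →
      T.D.bag (T.D.parent (t j)) ∩ T.D.bag (t j) ≠
      T.D.bag (T.D.parent (t j')) ∩ T.D.bag (t j')) →
    (∀ j j', (T.D.bag (T.D.parent (t j)) ∩ T.D.bag (t j)).ncard =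
      (T.D.bag (T.D.parent (t j')) ∩ T.D.bag (t j')).ncard) →
    (∀ u, EdgeOnPathP T.D.parent (T.D.parent (t 0)) (t (Fin.last N)) u →
      (T.D.bag (T.D.parent (t 0)) ∩ T.D.bag (t 0)).ncard ≤
      (T.D.bag (T.D.parent u) ∩ T.D.bag u).ncard) →
    A.G.LinkedSets ((T.D.bag (T.D.parent (t 0)) ∩ T.D.bag (t 0)).ncard)
      (T.D.bag (T.D.parent (t 0)) ∩ T.D.bag (t 0))
      (T.D.bag (T.D.parent (t 1)) ∩ T.D.bag (t 1))

section Realizer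

/-- The nodes of the node-realizer: the original nodes, a subdivision node for every
edge of the tree (identified with its head), and a new root. -/
def RPos {G : MGraph} (D : RootedTD G) : Type := (D.τ ⊕ {t : D.τ // t ≠ D.root}) ⊕ Unit

/-- The parent function of the node-realizer. -/
def rparent {G : MGraph} (D : RootedTD G) : RPos D → RPos D
  | Sum.inl (Sum.inl t) =>
      if h : t = D.root then Sum.inr () else Sum.inl (Sum.inr ⟨t, h⟩)
  | Sum.inl (Sum.inr s) => Sum.inl (Sum.inl (D.parent s.1))
  | Sum.inr _ => Sum.inr ()

/-- The bags of the node-realizer. -/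
def rbag (A : Asmb) (T : ATD A) : RPos T.D → Set A.G.V
  | Sum.inl (Sum.inl t) => T.D.bag t
  | Sum.inl (Sum.inr s) => T.D.bag s.1 ∩ T.D.bag (T.D.parent s.1)
  | Sum.inr _ => {v | ∃ p ∈ A.γ0.1, p.1 = v}

/-- A node of the node-realizer corresponds to a `Γ`-pseudo-edge-cut modulo `Z`. -/
def corrGPEC (A : Asmb) (T : ATD A) (Z : Set A.G.V) : RPos T.D → Prop
  | Sum.inl (Sum.inr s) =>
      ∀ v ∈ (T.D.bag s.1 ∩ T.D.bag (T.D.parent s.1)) \ Z, essNum A T s.1 v ≠ 2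
  | _ => False

/-- The `Γ`-elevation of the node-realizer of `T` is at most `d`. -/
def GammaElevLE (A : Asmb) (T : ATD A) (d : ℕ) : Prop :=
  ∀ (Z : Set A.G.V) (s : ℕ), 0 < s → ∀ (h : ℕ) (t : Fin (h+1) → RPos T.D),
    IsStripGen (rparent T.D) (rbag A T) (corrGPEC A T Z) Z s t → h + 1 ≤ d

end Realizer

/-- `T` is a rooted tree-decomposition over the family `F` of assemblages. -/
def OverFam (A : Asmb) (T : ATD A) (F : Set Asmb) : Prop :=
  ∀ (t : T.D.τ) (lt : List A.G.V)
    (hlt : t ≠ T.D.root → IsOrdering lt (T.D.bag t ∩ T.D.bag (T.D.parent t)))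
    (lc : T.D.τ → List A.G.V)
    (hlc : ∀ c, T.D.ChildOf c t → IsOrdering (lc c) (T.D.bag c ∩ T.D.bag t)),
    encU A T t lt hlt lc hlc ∈ F

/-- The assemblage `(G, ∅, ∅)`. -/
def emptyAsmb (G : MGraph) : Asmb where
  G := G
  γ0 := ⟨[], by simp⟩
  ι := Empty
  mar := fun i => i.elim

end

/-!
An assemblage on at most `n` vertices, with its vertices numbered below `n`, is described by
a code: its root march, the list of its labelled marches, the number of edges between each
pair of vertex numbers, and the label of each vertex number. Codes are well-quasi-ordered by
equality on the root march (which takes finitely many values), Higman's lemma on the list of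
marches, and Dickson's lemma on edge multiplicities and vertex labels. If the code of `S`
embeds in the code of `S'`, then `S` is a subgraph of `S'` with every edge realised by a
single edge, and this embedding is a simulation.
-/

open Function

section WellQuasiOrder

variable {α β : Type*} {r : α → α → Prop}

instance [IsPreorder α r] : IsPreorder (Option α) (Option.Rel r) where
  refl
    | none => .none
    | some a => .some (refl a)
  trans
    | _, _, _, .none, .none => .none
    | _, _, _, .some h₁, .some h₂ => .some (_root_.trans h₁ h₂)

theorem WellQuasiOrdered.optionRel (h : WellQuasiOrdered r) :
    WellQuasiOrdered (Option.Rel r) := by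
  intro f
  obtain ⟨g, hg⟩ := (Finite.wellQuasiOrdered (α := Bool) (· = ·)).exists_monotone_subseq
    fun k => (f k).isSome
  have h01 : g 0 < g 1 := g.strictMono Nat.zero_lt_one
  cases hs : (f (g 0)).isSome
  · have h1 : (f (g 1)).isSome = false := (hg 0 1 zero_le_one).symm.trans hs
    rw [Option.isSome_eq_false_iff, Option.isNone_iff_eq_none] at hs h1
    exact ⟨g 0, g 1, h01, by rw [hs, h1]; exact .none⟩
  · have hsome (k : ℕ) : (f (g k)).isSome := (hg 0 k k.zero_le) ▸ hs
    obtain ⟨m, m', hlt, hr⟩ := h fun k => (f (g k)).get (hsome k)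
    refine ⟨g m, g m', g.strictMono hlt, ?_⟩
    rw [← Option.some_get (hsome m), ← Option.some_get (hsome m')]
    exact .some hr

theorem WellQuasiOrdered.sublistForall₂ [IsPreorder α r] (h : WellQuasiOrdered r) :
    WellQuasiOrdered (List.SublistForall₂ r) := by
  rw [← Set.partiallyWellOrderedOn_univ_iff] at h ⊢
  exact (h.partiallyWellOrderedOn_sublistForall₂ r).mono fun _ _ _ _ => Set.mem_univ _

theorem List.SublistForall₂.exists_injective_ofFn {R : α → β → Prop} {m m' : ℕ}
    {F : Fin m → α} {G : Fin m' → β}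
    (h : List.SublistForall₂ R (List.ofFn F) (List.ofFn G)) :
    ∃ f : Fin m → Fin m', Injective f ∧ ∀ k, R (F k) (G (f k)) := by
  obtain ⟨l, hFl, hl⟩ := List.sublistForall₂_iff.1 h
  obtain ⟨hlen, hR⟩ := List.forall₂_iff_get.1 hFl
  obtain ⟨e, he⟩ := List.sublist_iff_exists_fin_orderEmbedding_get_eq.1 hl
  rw [List.length_ofFn] at hlen
  refine ⟨fun k => Fin.cast List.length_ofFn (e (Fin.cast hlen k)), fun k k' hk => ?_,
    fun k => ?_⟩
  · simpa using hk
  · have hk : R ((List.ofFn F).get (Fin.cast List.length_ofFn.symm k))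
        (l.get (Fin.cast hlen k)) := hR k _ _
    rw [he] at hk
    simp only [List.get_eq_getElem, List.getElem_ofFn] at hk
    exact hk

theorem exists_injective_comp_eq_of_card_fiber_le {γ : Type*} [Finite α] [Finite β]
    {f : α → γ} {g : β → γ}
    (h : ∀ c, Nat.card {a // f a = c} ≤ Nat.card {b // g b = c}) :
    ∃ π : α → β, Injective π ∧ ∀ a, g (π a) = f a := by
  have hemb (c : γ) : Nonempty ({a // f a = c} ↪ {b // g b = c}) := by
    have := Fintype.ofFinite {a // f a = c}
    have := Fintype.ofFinite {b // g b = c}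
    exact Embedding.nonempty_of_card_le (by simpa only [Nat.card_eq_fintype_card] using h c)
  let ι (c : γ) := (hemb c).some
  refine ⟨Equiv.sigmaFiberEquiv g ∘ Sigma.map id (ι ·) ∘ (Equiv.sigmaFiberEquiv f).symm,
    (Equiv.injective _).comp
      ((injective_id.sigma_map fun c => (ι c).injective).comp (Equiv.injective _)),
    fun a => (ι (f a) ⟨a, rfl⟩).2⟩

end WellQuasiOrder

theorem exists_comp_eq_of_forall_optionRel {α β γ Q R : Type*} {r : Q → R → Prop}
    {f : α → γ} {g : β → γ} (hf : Injective f) (hg : Injective g)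
    {φ : α → Q} {ψ : β → R}
    (h : ∀ c, Option.Rel r ((partialInv f c).map φ) ((partialInv g c).map ψ)) :
    ∃ β' : α → β, (∀ a, g (β' a) = f a) ∧ ∀ a, r (φ a) (ψ (β' a)) := by
  have H (a : α) : ∃ b, g b = f a ∧ r (φ a) (ψ b) := by
    have ha := h (f a)
    rw [partialInv_left hf, Option.map_some] at ha
    cases hb : partialInv g (f a) with
    | none => rw [hb] at ha; cases ha
    | some b =>
      rw [hb, Option.map_some, Option.rel_some_some] at ha
      exact ⟨b, (hg.isPartialInv _ _).1 hb, ha⟩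
  choose β' hβ' using H
  exact ⟨β', fun a => (hβ' a).1, fun a => (hβ' a).2⟩

namespace MGraph

noncomputable def edgeWalk (G : MGraph) (e : G.E) :
    G.Walk (G.ends e).out.1 (G.ends e).out.2 :=
  .cons e (Quot.out_eq _).symm (.nil _)

variable {G : MGraph} {e : G.E}

theorem mem_vertList_edgeWalk {x : G.V} : x ∈ (G.edgeWalk e).vertList ↔ x ∈ G.ends e := by
  conv_rhs => rw [← Quot.out_eq (G.ends e)]
  simp only [edgeWalk, Walk.vertList, List.mem_cons, List.not_mem_nil, or_false]
  exact Sym2.mem_iff.symm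

theorem isPath_edgeWalk (h : ¬ (G.ends e).IsDiag) : (G.edgeWalk e).IsPath := by
  rw [← Quot.out_eq (G.ends e)] at h
  simp only [Walk.IsPath, edgeWalk, Walk.vertList, List.nodup_cons, List.mem_cons,
    List.not_mem_nil, or_false, not_false_eq_true, List.nodup_nil, and_true]
  exact h

theorem isCycle_edgeWalk (h : (G.ends e).IsDiag) : (G.edgeWalk e).IsCycle := by
  rw [← Quot.out_eq (G.ends e)] at h
  exact ⟨h, by simp [edgeWalk, Walk.edgeList, Walk.vertList]⟩

structure SubgraphEmb (H G : MGraph) where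
  vmap : H.V → G.V
  vinj : Injective vmap
  emap : H.E → G.E
  einj : Injective emap
  ends_emap : ∀ e, G.ends (emap e) = (H.ends e).map vmap

namespace SubgraphEmb

variable {H : MGraph} (φ : SubgraphEmb H G)

noncomputable def toHomEmb : HomEmb H G where
  vmap := φ.vmap
  vinj := φ.vinj
  esrc e := (G.ends (φ.emap e)).out.1
  etgt e := (G.ends (φ.emap e)).out.2
  emap e := G.edgeWalk (φ.emap e)
  ends_eq e := (Quot.out_eq _).trans (φ.ends_emap e)
  is_path e h := isPath_edgeWalk (by rwa [φ.ends_emap, Sym2.isDiag_map φ.vinj])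
  is_cycle e h := isCycle_edgeWalk (by rwa [φ.ends_emap, Sym2.isDiag_map φ.vinj])
  edge_disjoint e₁ e₂ _ x h₁ h₂ := by
    rw [mem_vertList_edgeWalk, φ.ends_emap, Sym2.mem_map] at h₁ h₂
    obtain ⟨v, hv, rfl⟩ := h₁
    obtain ⟨w, hw, hwv⟩ := h₂
    exact ⟨v, rfl, hv, φ.vinj hwv ▸ hw⟩
  vert_cond v e h := by
    rw [mem_vertList_edgeWalk, φ.ends_emap, Sym2.mem_map] at h
    obtain ⟨w, hw, hwv⟩ := h
    exact φ.vinj hwv ▸ hw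

end SubgraphEmb

end MGraph

namespace MGraph.SubgraphEmb

variable {G₁ G₂ : MGraph} (φ : SubgraphEmb G₁ G₂) {γ₁ : March G₁} {γ₂ : March G₂}

theorem length_eq_of_map_eq (hγ : γ₁.1.map (Prod.map φ.vmap id) = γ₂.1) :
    γ₁.1.length = γ₂.1.length := by
  rw [← hγ, List.length_map]

theorem get_eq_of_map_eq (hγ : γ₁.1.map (Prod.map φ.vmap id) = γ₂.1)
    (i : Fin γ₁.1.length) :
    γ₂.1.get (Fin.cast (φ.length_eq_of_map_eq hγ) i) =
      Prod.map φ.vmap id (γ₁.1.get i) := by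
  simp [← hγ]

def rext (hγ : γ₁.1.map (Prod.map φ.vmap id) = γ₂.1) :
    SubgraphEmb (G₁.rext γ₁) (G₂.rext γ₂) where
  vmap := Sum.map φ.vmap (Fin.cast (φ.length_eq_of_map_eq hγ))
  vinj := φ.vinj.sumMap (Fin.cast_injective _)
  emap := Sum.map φ.emap <| Sigma.map (Fin.cast (φ.length_eq_of_map_eq hγ)) fun i =>
    Fin.cast (by rw [φ.get_eq_of_map_eq hγ]; rfl)
  einj := φ.einj.sumMap <| (Fin.cast_injective _).sigma_map fun _ => Fin.cast_injective _
  ends_emap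
    | .inl e => by
      change (G₂.ends (φ.emap e)).map Sum.inl = ((G₁.ends e).map Sum.inl).map _
      rw [φ.ends_emap, Sym2.map_map, Sym2.map_map]
      rfl
    | .inr ⟨i, _⟩ => by
      change s(Sum.inl (γ₂.1.get (Fin.cast (φ.length_eq_of_map_eq hγ) i)).1,
          Sum.inr (Fin.cast (φ.length_eq_of_map_eq hγ) i)) =
        s(Sum.inl (γ₁.1.get i).1, Sum.inr i).map _
      rw [Sym2.map_mk, φ.get_eq_of_map_eq hγ]
      rfl

noncomputable def toRHom (hγ : γ₁.1.map (Prod.map φ.vmap id) = γ₂.1) :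
    RHom G₁ G₂ γ₁ γ₂ where
  hlen := φ.length_eq_of_map_eq hγ
  emb := (φ.rext hγ).toHomEmb
  ind _ := rfl
  int_cond _ _ h := absurd h List.not_mem_nil
  pre_cond i v hv := (φ.rext hγ).vinj <| hv.trans <| by
    change _ = Sum.inl (φ.vmap _)
    rw [← Prod.map_fst φ.vmap id, ← φ.get_eq_of_map_eq hγ, Fin.cast_cast, Fin.cast_eq_self]

end MGraph.SubgraphEmb

theorem Sim.of_subgraphEmb {Q : Type*} {le : Q → Q → Prop} {S S' : QA Q le}
    (φ : S.G.SubgraphEmb S'.G)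
    (hγ : S.γ0.1.map (Prod.map φ.vmap id) = S'.γ0.1) (j : S.ι → S'.ι) (hj : Injective j)
    (hmar : ∀ i, (S.mar i).1.map (Prod.map φ.vmap id) = (S'.mar (j i)).1)
    (hlab : ∀ i, le (S.lab i) (S'.lab (j i))) (hφ : ∀ v, le (S.φ v) (S'.φ (φ.vmap v))) :
    Sim le S S' :=
  ⟨φ.toRHom hγ, j, hj, fun v => ⟨φ.vmap v, rfl, hφ v⟩, hlab, fun i => by
    rw [← hmar i, List.map_map]
    rfl⟩

section Code

variable {n : ℕ} {Q : Type*} {le : Q → Q → Prop}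

abbrev MarchCode (n : ℕ) : Type := {l : List (Fin n × Fin 3) // l.length ≤ n}

instance : Finite (MarchCode n) := (List.finite_length_le _ n).to_subtype

def marchCode {G : MGraph} (enc : G.V ↪ Fin n) (γ : March G) : MarchCode n :=
  ⟨γ.1.map (Prod.map enc id), by simpa using (γ.2.map enc.injective).length_le_card⟩

theorem map_eq_of_marchCode_eq {G G' : MGraph} {enc : G.V ↪ Fin n}
    {enc' : G'.V ↪ Fin n} {β : G.V → G'.V} (hβ : ∀ v, enc' (β v) = enc v) {γ : March G}
    {γ' : March G'} (h : marchCode enc γ = marchCode enc' γ') :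
    γ.1.map (Prod.map β id) = γ'.1 := by
  have h' : γ.1.map (Prod.map enc id) = γ'.1.map (Prod.map enc' id) := congrArg Subtype.val h
  apply List.map_injective_iff.2 (enc'.injective.prodMap injective_id)
  rw [List.map_map, ← h']
  congr 1
  ext <;> simp [hβ]

structure AsmbCode (n : ℕ) (Q : Type*) where
  root : MarchCode n
  marches : List (MarchCode n × Q)
  edges : Sym2 (Fin n) → ℕ
  labels : Fin n → Option Q

variable (le) in
def AsmbCode.Embeds (a b : AsmbCode n Q) : Prop :=
  a.root = b.root ∧
    List.SublistForall₂ (fun x y => x.1 = y.1 ∧ le x.2 y.2) a.marches b.marches ∧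
    a.edges ≤ b.edges ∧ ∀ m, Option.Rel le (a.labels m) (b.labels m)

theorem AsmbCode.wellQuasiOrdered_embeds (hle : IsWQORel le) :
    WellQuasiOrdered (AsmbCode.Embeds (n := n) le) := by
  obtain ⟨hrefl, htrans, hwqo⟩ := hle
  replace hwqo : WellQuasiOrdered le := hwqo
  have : IsPreorder Q le := { refl := hrefl, trans := htrans }
  have : IsPreorder (MarchCode n × Q) fun x y => x.1 = y.1 ∧ le x.2 y.2 :=
    { refl x := ⟨rfl, hrefl x.2⟩
      trans _ _ _ h₁ h₂ := ⟨h₁.1.trans h₂.1, htrans _ _ _ h₁.2 h₂.2⟩ }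
  have : IsPreorder (List (MarchCode n × Q))
      (List.SublistForall₂ fun x y => x.1 = y.1 ∧ le x.2 y.2) := {}
  have hroot := Finite.wellQuasiOrdered (α := MarchCode n) (· = ·)
  have hedges := _root_.wellQuasiOrdered_le (α := Sym2 (Fin n) → ℕ)
  have hlabels := WellQuasiOrdered.pi fun _ : Fin n => hwqo.optionRel
  have h := hroot.prod ((hroot.prod hwqo).sublistForall₂.prod (hedges.prod hlabels))
  exact fun f => h fun k => ((f k).root, (f k).marches, (f k).edges, (f k).labels)

/-- Vertices are numbered by `enc`; `edges s` counts the edges whose ends are numbered by `s`,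
and `labels m` is the label of the vertex numbered `m`, if there is one. -/
noncomputable def QA.code (S : QA Q le) (enc : S.G.V ↪ Fin n) : AsmbCode n Q where
  root := marchCode enc S.γ0
  marches := List.ofFn fun k => let i := (Fintype.equivFin S.ι).symm k
    (marchCode enc (S.mar i), S.lab i)
  edges s := Nat.card {e // (S.G.ends e).map enc = s}
  labels m := (partialInv enc m).map S.φ

theorem QA.sim_of_code_embeds {S S' : QA Q le} {enc : S.G.V ↪ Fin n} {enc' : S'.G.V ↪ Fin n}
    (h : AsmbCode.Embeds le (S.code enc) (S'.code enc')) : Sim le S S' := by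
  obtain ⟨hroot, hmarches, hedges, hlabels⟩ := h
  obtain ⟨β, hβ, hφ⟩ :=
    exists_comp_eq_of_forall_optionRel enc.injective enc'.injective hlabels
  obtain ⟨π, hπ, hπends⟩ := exists_injective_comp_eq_of_card_fiber_le hedges
  let φ : S.G.SubgraphEmb S'.G :=
    { vmap := β
      vinj := fun v w hvw => enc.injective (by rw [← hβ v, ← hβ w, hvw])
      emap := π
      einj := hπ
      ends_emap e := Sym2.map.injective enc'.injective <| by
        rw [hπends, Sym2.map_map]
        exact congrArg (Sym2.map · _) (funext hβ).symm }
  obtain ⟨f, hf, hfmar⟩ := hmarches.exists_injective_ofFn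
  let e := Fintype.equivFin S.ι
  let e' := Fintype.equivFin S'.ι
  refine Sim.of_subgraphEmb φ (map_eq_of_marchCode_eq hβ hroot) (e'.symm ∘ f ∘ e)
    (e'.symm.injective.comp (hf.comp e.injective)) (fun i => ?_) (fun i => ?_) hφ
  · simpa [e] using map_eq_of_marchCode_eq hβ (hfmar (e i)).1
  · simpa [e] using (hfmar (e i)).2

end Code

/-- Lemma 7.1: the assemblages on at most `n` vertices form a well-behaved family. -/
theorem wellbehaved_bounded_size (n : ℕ) :
    WellBehaved {A : Asmb | Fintype.card A.G.V ≤ n} := by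
  intro Q le hle S hS
  have enc (k : ℕ) : (S k).G.V ↪ Fin n :=
    (Embedding.nonempty_of_card_le (by rw [Fintype.card_fin]; exact hS k)).some
  obtain ⟨i, j, hij, h⟩ := AsmbCode.wellQuasiOrdered_embeds hle fun k => (S k).code (enc k)
  exact ⟨i, j, hij, QA.sim_of_code_embeds h⟩
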